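/- Let Δ > 0 and fix a real r with 0 ≤ r < Δ. Then the error ratio Q⁻(i, r) is monotonically nondecreasing as a function of i on the set of reals i ≤ −1: for all i₁ ≤ i₂ ≤ −1, Q⁻(i₁, r) ≤ Q⁻(i₂, r). -/

import Mathlib

/-!
With `K i t = (Φ⁻)'(i - t) - (Φ⁻)'(i)` (`taylorKernel`), the remainder is
`E⁻(i, r) = -∫₀ʳ K i t dt`, so `Q⁻(i, r)` is the fraction of the mass of `K i` on `[0, Δ]`
that lies in `[0, r]`.
With `u = 2^i` and `p = 2^(-t)` one has `K i t = u (1 - p) / ((1 - u p)(1 - u))`, and the kernel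
is totally positive of order two: `K i₁ t * K i₂ τ ≤ K i₂ t * K i₁ τ` for `i₁ ≤ i₂` and `t ≤ τ`,
because the two sides differ by a nonnegative multiple of `(2^i₂ - 2^i₁)(2^(-t) - 2^(-τ))`.
So `K i₂ / K i₁` is nonincreasing in `t`: as `i` grows the mass of `K i` moves towards `0`,
and the fraction on `[0, r]` grows.
-/

/-- Φ⁻(x) = log₂(1 − 2^x) -/
noncomputable def Phim (x : ℝ) : ℝ := Real.logb 2 (1 - (2:ℝ) ^ x)

/-- (Φ⁻)'(x) = −2^x / (1 − 2^x) -/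
noncomputable def dPhim (x : ℝ) : ℝ := -(2:ℝ) ^ x / (1 - (2:ℝ) ^ x)

/-- First-order Taylor remainder E⁻(i, r) -/
noncomputable def Em (i r : ℝ) : ℝ := Phim (i - r) - Phim i + r * dPhim i

/-- Error ratio Q⁻(i, r) = E⁻(i, r)/E⁻(i, Δ) -/
noncomputable def Qm (Δ i r : ℝ) : ℝ := Em i r / Em i Δ

open Real Set intervalIntegral
open MeasureTheory (volume)

theorem integral_div_integral_le_of_mul_le_mul {f g : ℝ → ℝ} {a b c : ℝ} (hab : a ≤ b)
    (hbc : b ≤ c)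
    (hf : IntervalIntegrable f volume a c) (hg : IntervalIntegrable g volume a c)
    (hf_pos : ∀ t ∈ Ioc a c, 0 < f t) (hg_pos : ∀ t ∈ Ioc a c, 0 < g t)
    (hfg : ∀ t ∈ Ioc a c, ∀ τ ∈ Ioc a c, t ≤ τ → f t * g τ ≤ g t * f τ) :
    (∫ t in a..b, f t) / (∫ t in a..c, f t) ≤ (∫ t in a..b, g t) / (∫ t in a..c, g t) := by
  rcases hab.eq_or_lt with rfl | hab
  · simp
  have hac : a < c := hab.trans_le hbc
  have hb : b ∈ Ioc a c := ⟨hab, hbc⟩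
  have sub_ab : uIcc a b ⊆ uIcc a c := uIcc_subset_uIcc left_mem_uIcc (mem_uIcc_of_le hab.le hbc)
  have sub_bc : uIcc b c ⊆ uIcc a c := uIcc_subset_uIcc (mem_uIcc_of_le hab.le hbc) right_mem_uIcc
  have hfab := hf.mono_set sub_ab
  have hgab := hg.mono_set sub_ab
  have hfbc := hf.mono_set sub_bc
  have hgbc := hg.mono_set sub_bc
  have hIoo : Ioo a b ⊆ Ioc a c := fun t ht => ⟨ht.1, ht.2.le.trans hbc⟩
  have hIcc : Icc b c ⊆ Ioc a c := fun t ht => ⟨hab.trans_le ht.1, ht.2⟩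
  have hTf : 0 < ∫ t in a..c, f t :=
    intervalIntegral_pos_of_pos_on hf (fun t ht => hf_pos t (Ioo_subset_Ioc_self ht)) hac
  have hTg : 0 < ∫ t in a..c, g t :=
    intervalIntegral_pos_of_pos_on hg (fun t ht => hg_pos t (Ioo_subset_Ioc_self ht)) hac
  have hAg : 0 < ∫ t in a..b, g t :=
    intervalIntegral_pos_of_pos_on hgab (fun t ht => hg_pos t (hIoo ht)) hab
  have hCg : 0 ≤ ∫ t in b..c, g t := integral_nonneg hbc fun t ht => (hg_pos t (hIcc ht)).le
  -- compare both pieces with the values at the splitting point `b`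
  have left : (∫ t in a..b, f t) * g b ≤ (∫ t in a..b, g t) * f b := by
    simp only [← integral_mul_const]
    exact integral_mono_on_of_le_Ioo hab.le (hfab.mul_const _) (hgab.mul_const _)
      fun t ht => hfg t (hIoo ht) b hb ht.2.le
  have right : f b * (∫ t in b..c, g t) ≤ g b * (∫ t in b..c, f t) := by
    simp only [← integral_const_mul]
    exact integral_mono_on hbc (hgbc.const_mul _) (hfbc.const_mul _)
      fun τ hτ => hfg b hb τ (hIcc hτ) hτ.1
  have cross : (∫ t in a..b, f t) * (∫ t in b..c, g t) ≤
      (∫ t in a..b, g t) * (∫ t in b..c, f t) := by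
    have hfb := hf_pos b hb
    have hgb := hg_pos b hb
    refine le_of_mul_le_mul_right ?_ (mul_pos hfb hgb)
    calc (∫ t in a..b, f t) * (∫ t in b..c, g t) * (f b * g b)
        = ((∫ t in a..b, f t) * g b) * (f b * ∫ t in b..c, g t) := by ring
      _ ≤ ((∫ t in a..b, g t) * f b) * (g b * ∫ t in b..c, f t) :=
        mul_le_mul left right (by positivity) (by positivity)
      _ = (∫ t in a..b, g t) * (∫ t in b..c, f t) * (f b * g b) := by ring
  rw [div_le_div_iff₀ hTf hTg, ← integral_add_adjacent_intervals hfab hfbc,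
    ← integral_add_adjacent_intervals hgab hgbc]
  nlinarith

theorem hasDerivAt_Phim {x : ℝ} (hx : x < 0) : HasDerivAt Phim (dPhim x) x := by
  have hne : 1 - (2:ℝ) ^ x ≠ 0 := (sub_pos.2 (rpow_lt_one_of_one_lt_of_neg one_lt_two hx)).ne'
  have h := ((((hasStrictDerivAt_const_rpow two_pos x).hasDerivAt).const_sub 1).log hne).div_const
    (log 2)
  refine h.congr_deriv ?_
  have hlog : log 2 ≠ 0 := (log_pos one_lt_two).ne'
  unfold dPhim
  field_simp

theorem continuousOn_dPhim : ContinuousOn dPhim (Iio 0) := by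
  have h2 : Continuous fun x : ℝ => (2:ℝ) ^ x := continuous_const_rpow two_ne_zero
  exact h2.neg.continuousOn.div (continuous_const.sub h2).continuousOn fun x hx =>
    (sub_pos.2 (rpow_lt_one_of_one_lt_of_neg one_lt_two hx)).ne'

noncomputable def taylorKernel (i t : ℝ) : ℝ := dPhim (i - t) - dPhim i

theorem intervalIntegrable_taylorKernel {i r : ℝ} (hi : i < 0) (hr : 0 ≤ r) :
    IntervalIntegrable (taylorKernel i) volume 0 r := by
  refine ContinuousOn.intervalIntegrable ?_
  refine (continuousOn_dPhim.comp (continuous_const.sub continuous_id).continuousOn ?_).sub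
    continuousOn_const
  intro t ht
  rw [uIcc_of_le hr] at ht
  show i - t < 0
  linarith [ht.1]

theorem Em_eq_neg_integral {i r : ℝ} (hi : i < 0) (hr : 0 ≤ r) :
    Em i r = -∫ t in 0..r, taylorKernel i t := by
  have hderiv : ∀ t ∈ uIcc 0 r,
      HasDerivAt (fun s => -Phim (i - s) - s * dPhim i) (taylorKernel i t) t := by
    intro t ht
    rw [uIcc_of_le hr] at ht
    have h := ((hasDerivAt_Phim (by linarith [ht.1] : i - t < 0)).comp t
      ((hasDerivAt_id t).const_sub i)).neg.sub ((hasDerivAt_id t).mul_const (dPhim i))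
    exact h.congr_deriv (by unfold taylorKernel; ring)
  rw [integral_eq_sub_of_hasDerivAt hderiv (intervalIntegrable_taylorKernel hi hr), Em]
  simp only [sub_zero, zero_mul]
  ring

theorem Qm_eq_integral_div_integral {Δ i r : ℝ} (hi : i < 0) (hr : 0 ≤ r) (hΔ : 0 ≤ Δ) :
    Qm Δ i r = (∫ t in 0..r, taylorKernel i t) / ∫ t in 0..Δ, taylorKernel i t := by
  rw [Qm, Em_eq_neg_integral hi hr, Em_eq_neg_integral hi hΔ, neg_div_neg_eq]

theorem taylorKernel_eq {i t : ℝ} (hi : i < 0) (ht : 0 ≤ t) :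
    taylorKernel i t = 2 ^ i * (1 - 2 ^ (-t)) / ((1 - 2 ^ i * 2 ^ (-t)) * (1 - 2 ^ i)) := by
  have hsplit : (2:ℝ) ^ (i - t) = 2 ^ i * 2 ^ (-t) := by
    rw [sub_eq_add_neg, rpow_add two_pos]
  have h1 : 1 - (2:ℝ) ^ i ≠ 0 := (sub_pos.2 (rpow_lt_one_of_one_lt_of_neg one_lt_two hi)).ne'
  have h2 : 1 - (2:ℝ) ^ i * 2 ^ (-t) ≠ 0 := by
    rw [← hsplit]
    exact (sub_pos.2 (rpow_lt_one_of_one_lt_of_neg one_lt_two (by linarith))).ne'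
  rw [taylorKernel, dPhim, dPhim, hsplit]
  field_simp
  ring

theorem taylorKernel_pos {i t : ℝ} (hi : i < 0) (ht : 0 < t) : 0 < taylorKernel i t := by
  have hu : (2:ℝ) ^ i < 1 := rpow_lt_one_of_one_lt_of_neg one_lt_two hi
  have hp : (2:ℝ) ^ (-t) < 1 := rpow_lt_one_of_one_lt_of_neg one_lt_two (neg_neg_of_pos ht)
  have hu0 : 0 < (2:ℝ) ^ i := rpow_pos_of_pos two_pos i
  have hp0 : 0 < (2:ℝ) ^ (-t) := rpow_pos_of_pos two_pos (-t)
  rw [taylorKernel_eq hi ht.le]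
  exact div_pos (by nlinarith) (mul_pos (by nlinarith) (by linarith))

theorem taylorKernel_mul_le {i₁ i₂ t τ : ℝ} (hi : i₁ ≤ i₂) (hi₂ : i₂ < 0) (ht : 0 ≤ t)
    (htτ : t ≤ τ) :
    taylorKernel i₁ t * taylorKernel i₂ τ ≤ taylorKernel i₂ t * taylorKernel i₁ τ := by
  have hi₁ : i₁ < 0 := hi.trans_lt hi₂
  have hτ : 0 ≤ τ := ht.trans htτ
  rw [taylorKernel_eq hi₁ ht, taylorKernel_eq hi₂ hτ, taylorKernel_eq hi₂ ht,
    taylorKernel_eq hi₁ hτ, div_mul_div_comm, div_mul_div_comm]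
  set u₁ := (2:ℝ) ^ i₁
  set u₂ := (2:ℝ) ^ i₂
  set p := (2:ℝ) ^ (-t)
  set q := (2:ℝ) ^ (-τ)
  have hu₁ : 0 < u₁ := rpow_pos_of_pos two_pos i₁
  have hu₁₂ : u₁ ≤ u₂ := (rpow_le_rpow_left_iff one_lt_two).2 hi
  have hu₂ : u₂ < 1 := rpow_lt_one_of_one_lt_of_neg one_lt_two hi₂
  have hq : 0 < q := rpow_pos_of_pos two_pos (-τ)
  have hqp : q ≤ p := (rpow_le_rpow_left_iff one_lt_two).2 (neg_le_neg htτ)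
  have hp : p ≤ 1 := rpow_le_one_of_one_le_of_nonpos one_le_two (neg_nonpos.2 ht)
  have cross : (1 - u₂ * p) * (1 - u₁ * q) ≤ (1 - u₁ * p) * (1 - u₂ * q) := by
    nlinarith [mul_nonneg (sub_nonneg.2 hu₁₂) (sub_nonneg.2 hqp)]
  have hu₂p : 0 < 1 - u₂ * p := by nlinarith
  have hu₁q : 0 < 1 - u₁ * q := by nlinarith
  rw [show u₂ * (1 - p) * (u₁ * (1 - q)) = u₁ * (1 - p) * (u₂ * (1 - q)) by ring]
  refine div_le_div_of_nonneg_left ?_ ?_ ?_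
  · exact mul_nonneg (mul_nonneg hu₁.le (by linarith)) (mul_nonneg (by linarith) (by linarith))
  · exact mul_pos (mul_pos hu₂p (by linarith)) (mul_pos hu₁q (by linarith))
  · nlinarith [mul_le_mul_of_nonneg_right cross (mul_nonneg (sub_nonneg.2 (hu₁₂.trans hu₂.le))
      (sub_nonneg.2 hu₂.le))]

theorem stmt_11_general (Δ : ℝ) (r : ℝ) (hr0 : 0 ≤ r) (hrΔ : r < Δ) :
    ∀ i₁ i₂ : ℝ, i₁ ≤ i₂ → i₂ ≤ -1 → Qm Δ i₁ r ≤ Qm Δ i₂ r := by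
  intro i₁ i₂ hi hi₂_le
  have hi₂ : i₂ < 0 := by linarith
  have hi₁ : i₁ < 0 := hi.trans_lt hi₂
  have hΔ : 0 ≤ Δ := hr0.trans hrΔ.le
  rw [Qm_eq_integral_div_integral hi₁ hr0 hΔ, Qm_eq_integral_div_integral hi₂ hr0 hΔ]
  exact integral_div_integral_le_of_mul_le_mul hr0 hrΔ.le
    (intervalIntegrable_taylorKernel hi₁ hΔ) (intervalIntegrable_taylorKernel hi₂ hΔ)
    (fun t ht => taylorKernel_pos hi₁ ht.1) (fun t ht => taylorKernel_pos hi₂ ht.1)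
    fun t ht τ _ htτ => taylorKernel_mul_le hi hi₂ ht.1.le htτ

theorem stmt_11 (Δ : ℝ) (hΔ : 0 < Δ) (r : ℝ) (hr0 : 0 ≤ r) (hrΔ : r < Δ) :
    ∀ i₁ i₂ : ℝ, i₁ ≤ i₂ → i₂ ≤ -1 → Qm Δ i₁ r ≤ Qm Δ i₂ r :=
  stmt_11_general Δ r hr0 hrΔ
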